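/- Symmetry property of the projection onto the manifold of global minima: for every θ ∈ ℝ^{(p+d)×d}, if θ* is a point of S minimizing ‖θ − s‖_P over s ∈ S and Δ = θ − θ*, then the d×d matrix Δᵀ P θ* Σ is symmetric. -/

import Mathlib

open MeasureTheory Matrix Real
open scoped BigOperators

noncomputable section

def vnorm {ι : Type*} [Fintype ι] (v : ι → ℝ) : ℝ := Real.sqrt (∑ i, (v i) ^ 2)

def frob {ι κ : Type*} [Fintype ι] [Fintype κ] (A : Matrix ι κ ℝ) : ℝ :=
  Real.sqrt (∑ i, ∑ j, (A i j) ^ 2)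

def opN {ι κ : Type*} [Fintype ι] [Fintype κ] (A : Matrix ι κ ℝ) : ℝ :=
  sSup {r | ∃ x : κ → ℝ, vnorm x ≤ 1 ∧ r = vnorm (A.mulVec x)}

def svalMax {ι κ : Type*} [Fintype ι] [Fintype κ] (A : Matrix ι κ ℝ) : ℝ :=
  sSup {r | ∃ x : κ → ℝ, vnorm x = 1 ∧ r = vnorm (A.mulVec x)}

def svalMin {ι κ : Type*} [Fintype ι] [Fintype κ] (A : Matrix ι κ ℝ) : ℝ :=
  sInf {r | ∃ x : κ → ℝ, vnorm x = 1 ∧ r = vnorm (A.mulVec x)}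

def msqrt {ι : Type*} [Fintype ι] [DecidableEq ι] (S : Matrix ι ι ℝ) : Matrix ι ι ℝ :=
  @dite _ (S.IsHermitian ∧ ∀ x : ι → ℝ, 0 ≤ star x ⬝ᵥ (S *ᵥ x)) (Classical.dec _)
    (fun h => (h.1.eigenvectorUnitary : Matrix ι ι ℝ) *
      Matrix.diagonal ((↑) ∘ Real.sqrt ∘ h.1.eigenvalues) *
      (star h.1.eigenvectorUnitary : Matrix ι ι ℝ)) (fun _ => 0)

def gaussian {k : ℕ} (S : Matrix (Fin k) (Fin k) ℝ) : Measure (Fin k → ℝ) :=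
  Measure.map ((msqrt S).mulVec) (Measure.pi fun _ => ProbabilityTheory.gaussianReal 0 1)

/-- Population loss. -/
def popLoss {d p : ℕ} (Sig : Matrix (Fin d) (Fin d) ℝ) (Om : Matrix (Fin p) (Fin p) ℝ)
    (M A : Matrix (Fin p) (Fin d) ℝ) (B : Matrix (Fin d) (Fin d) ℝ) : ℝ :=
  (1/2) * ∫ w : (Fin d → ℝ) × (Fin p → ℝ),
      vnorm (A.mulVec
        ((∫ x2, Real.exp (w.1 ⬝ᵥ B.mulVec x2) ∂gaussian Sig)⁻¹ •
          ∫ x2, Real.exp (w.1 ⬝ᵥ B.mulVec x2) • x2 ∂gaussian Sig)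
        - (M.mulVec w.1 + w.2)) ^ 2
    ∂((gaussian Sig).prod (gaussian Om))

/-- Population regularizer. -/
def reg {d p : ℕ} (Sig : Matrix (Fin d) (Fin d) ℝ) (A : Matrix (Fin p) (Fin d) ℝ)
    (B : Matrix (Fin d) (Fin d) ℝ) : ℝ :=
  (1/8) * frob (msqrt Sig * (Aᵀ * A - Bᵀ * Sig * B) * msqrt Sig) ^ 2

/-- Vertical concatenation of `A` and `B`. -/
def vcat {d p : ℕ} (A : Matrix (Fin p) (Fin d) ℝ) (B : Matrix (Fin d) (Fin d) ℝ) :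
    Matrix (Fin p ⊕ Fin d) (Fin d) ℝ := Matrix.of (Sum.elim A B)

def topM {d p : ℕ} (θ : Matrix (Fin p ⊕ Fin d) (Fin d) ℝ) : Matrix (Fin p) (Fin d) ℝ :=
  Matrix.of fun i j => θ (Sum.inl i) j

def botM {d p : ℕ} (θ : Matrix (Fin p ⊕ Fin d) (Fin d) ℝ) : Matrix (Fin d) (Fin d) ℝ :=
  Matrix.of fun i j => θ (Sum.inr i) j

/-- Extended covariance matrix `P = diag(I_p, Σ)`. -/
def Pmat (p : ℕ) {d : ℕ} (Sig : Matrix (Fin d) (Fin d) ℝ) :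
    Matrix (Fin p ⊕ Fin d) (Fin p ⊕ Fin d) ℝ :=
  Matrix.fromBlocks 1 0 0 Sig

def Pinner {d p : ℕ} (Sig : Matrix (Fin d) (Fin d) ℝ)
    (θ1 θ2 : Matrix (Fin p ⊕ Fin d) (Fin d) ℝ) : ℝ :=
  (θ1ᵀ * Pmat p Sig * θ2).trace

def Pnorm {d p : ℕ} (Sig : Matrix (Fin d) (Fin d) ℝ)
    (θ : Matrix (Fin p ⊕ Fin d) (Fin d) ℝ) : ℝ :=
  Real.sqrt (Pinner Sig θ θ)

attribute [local instance] Matrix.normedAddCommGroup Matrix.normedSpace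

/-- Gradient (w.r.t. the Frobenius inner product) of a scalar function of a matrix. -/
def matGrad {ι κ : Type*} [Fintype ι] [Fintype κ] [DecidableEq ι] [DecidableEq κ]
    (f : Matrix ι κ ℝ → ℝ) (θ : Matrix ι κ ℝ) : Matrix ι κ ℝ :=
  Matrix.of fun i j => fderiv ℝ f θ (Matrix.single i j 1)

/-- Regularized population loss as a function of the concatenated parameter. -/
def Qfun {d p : ℕ} (Sig : Matrix (Fin d) (Fin d) ℝ) (Om : Matrix (Fin p) (Fin p) ℝ)
    (M : Matrix (Fin p) (Fin d) ℝ) (θ : Matrix (Fin p ⊕ Fin d) (Fin d) ℝ) : ℝ :=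
  popLoss Sig Om M (topM θ) (botM θ) + reg Sig (topM θ) (botM θ)

def gradQ {d p : ℕ} (Sig : Matrix (Fin d) (Fin d) ℝ) (Om : Matrix (Fin p) (Fin p) ℝ)
    (M : Matrix (Fin p) (Fin d) ℝ) (θ : Matrix (Fin p ⊕ Fin d) (Fin d) ℝ) :
    Matrix (Fin p ⊕ Fin d) (Fin d) ℝ :=
  matGrad (Qfun Sig Om M) θ

/-- The manifold `S` of global minimizers. -/
def Sman {d p : ℕ} (Sig : Matrix (Fin d) (Fin d) ℝ) (U : Matrix (Fin p) (Fin d) ℝ)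
    (Γ V : Matrix (Fin d) (Fin d) ℝ) : Set (Matrix (Fin p ⊕ Fin d) (Fin d) ℝ) :=
  {θ | ∃ J : Matrix (Fin d) (Fin d) ℝ, Jᵀ * J = 1 ∧
    θ = vcat (U * msqrt Γ * Jᵀ * (msqrt Sig)⁻¹)
             ((msqrt Sig)⁻¹ * V * msqrt Γ * Jᵀ * (msqrt Sig)⁻¹)}

def K0 {d p : ℕ} (Sig : Matrix (Fin d) (Fin d) ℝ) (M : Matrix (Fin p) (Fin d) ℝ) : ℝ :=
  2 * svalMin (M * msqrt Sig) * svalMin Sig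

def K1 {d p : ℕ} (Sig : Matrix (Fin d) (Fin d) ℝ) (M : Matrix (Fin p) (Fin d) ℝ) : ℝ :=
  2 * svalMax (M * msqrt Sig) * svalMax Sig

def betaC {d p : ℕ} (Sig : Matrix (Fin d) (Fin d) ℝ) (M : Matrix (Fin p) (Fin d) ℝ) : ℝ :=
  (14 + 7 * (svalMax Sig / svalMin Sig) ^ 2) * K1 Sig M ^ 2
    + 21 * opN Sig ^ 2 * K1 Sig M + 7 * opN Sig ^ 4

def eps0 {d p : ℕ} (Sig : Matrix (Fin d) (Fin d) ℝ) (M : Matrix (Fin p) (Fin d) ℝ) : ℝ :=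
  min 1 (min (Real.sqrt (K0 Sig M / (3 * K1 Sig M * opN Sig)))
    (Real.sqrt (Real.sqrt (K0 Sig M / 2)) / Real.sqrt (opN Sig)))

def eps1 {d p : ℕ} (Sig : Matrix (Fin d) (Fin d) ℝ) (M : Matrix (Fin p) (Fin d) ℝ) : ℝ :=
  (1 / (2 * Real.sqrt (opN Sig))) * (1/16 - Real.sqrt (svalMax (M * msqrt Sig)))

/-- Softmax self-attention weights. -/
def softmaxW {d n : ℕ} (B : Matrix (Fin d) (Fin d) ℝ) (X : Fin n → Fin d → ℝ)
    (i j : Fin n) : ℝ :=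
  Real.exp (X i ⬝ᵥ B.mulVec (X j)) / ∑ k, Real.exp (X i ⬝ᵥ B.mulVec (X k))

/-- Softmax-weighted mean `μ_i`. -/
def wmean {d n : ℕ} (B : Matrix (Fin d) (Fin d) ℝ) (X : Fin n → Fin d → ℝ)
    (i : Fin n) : Fin d → ℝ :=
  ∑ j, softmaxW B X i j • X j


/-- Empirical covariance of a sample. -/
def empCov {d n : ℕ} (X : Fin n → Fin d → ℝ) : Matrix (Fin d) (Fin d) ℝ :=
  (n:ℝ)⁻¹ • ∑ i, Matrix.vecMulVec (X i) (X i)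

private lemma stdBasis_transpose {d : ℕ} (i j : Fin d) :
    (Matrix.single i j (1:ℝ))ᵀ = Matrix.single j i 1 := by
  ext a b
  simp [Matrix.single, Matrix.transpose_apply, and_comm]

private lemma trace_mul_stdBasis {d : ℕ} (M : Matrix (Fin d) (Fin d) ℝ) (i j : Fin d) :
    (M * Matrix.single i j (1:ℝ)).trace = M j i := by
  classical
  rw [Matrix.trace, Finset.sum_eq_single j]
  · simp
  · intro b _ hb
    simp [Matrix.diag, hb]
  · simp

private lemma vcat_mul' {d p : ℕ} (A : Matrix (Fin p) (Fin d) ℝ) (B C : Matrix (Fin d) (Fin d) ℝ) :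
    vcat A B * C = vcat (A * C) (B * C) := by
  ext x k
  cases x <;> rfl

private lemma pinner_expand {d p : ℕ} (Sig : Matrix (Fin d) (Fin d) ℝ)
    (a b : Matrix (Fin p ⊕ Fin d) (Fin d) ℝ) :
    Pinner Sig a b = ∑ k : Fin d, ∑ m : Fin p ⊕ Fin d, ∑ l : Fin p ⊕ Fin d,
      a l k * Pmat p Sig l m * b m k := by
  unfold Pinner
  rw [Matrix.trace]
  refine Finset.sum_congr rfl fun k _ => ?_
  simp only [Matrix.diag_apply, Matrix.mul_apply, Matrix.transpose_apply, Finset.sum_mul]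

set_option maxHeartbeats 1000000 in
/-- Symmetry property of the projection onto the manifold of global minima. -/
theorem projection_symmetry
    {d p : ℕ} (hdp : d ≤ p)
    (Sig : Matrix (Fin d) (Fin d) ℝ) (M : Matrix (Fin p) (Fin d) ℝ)
    (hSig : Sig.PosDef)
    (U : Matrix (Fin p) (Fin d) ℝ) (Γ V : Matrix (Fin d) (Fin d) ℝ)
    (hrank : (M * msqrt Sig).rank = d)
    (hU : Uᵀ * U = 1) (hV : Vᵀ * V = 1)
    (hΓdiag : Γ.IsDiag) (hΓpos : ∀ i, 0 < Γ i i)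
    (hSVD : M * msqrt Sig = U * Γ * Vᵀ)
    (θ θstar : Matrix (Fin p ⊕ Fin d) (Fin d) ℝ)
    (hmem : θstar ∈ Sman Sig U Γ V)
    (hproj : ∀ s ∈ Sman Sig U Γ V, Pnorm Sig (θ - θstar) ≤ Pnorm Sig (θ - s))
    :
    ((θ - θstar)ᵀ * Pmat p Sig * θstar * Sig).IsSymm := by
  classical
  obtain ⟨J, hJ, hθs⟩ := hmem
  have hSigPSD : Sig.PosSemidef := hSig.posSemidef
  set W : Matrix (Fin d) (Fin d) ℝ := msqrt Sig with hWdef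
  have hcond : Sig.IsHermitian ∧ ∀ x : Fin d → ℝ, 0 ≤ star x ⬝ᵥ (Sig *ᵥ x) :=
    ⟨hSig.isHermitian, hSigPSD.dotProduct_mulVec_nonneg⟩
  have hWeq : W = (hcond.1.eigenvectorUnitary : Matrix (Fin d) (Fin d) ℝ) *
      Matrix.diagonal ((↑) ∘ Real.sqrt ∘ hcond.1.eigenvalues) *
      (star hcond.1.eigenvectorUnitary : Matrix (Fin d) (Fin d) ℝ) := by
    rw [hWdef]; unfold msqrt; rw [dif_pos hcond]
  have hWW : W * W = Sig := by
    rw [hWeq]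
    have hUU : (star hcond.1.eigenvectorUnitary : Matrix (Fin d) (Fin d) ℝ) *
        (hcond.1.eigenvectorUnitary : Matrix (Fin d) (Fin d) ℝ) = 1 :=
      Unitary.star_mul_self_of_mem hcond.1.eigenvectorUnitary.2
    have hDD : Matrix.diagonal ((fun x : ℝ => x) ∘ Real.sqrt ∘ hcond.1.eigenvalues) *
        Matrix.diagonal ((fun x : ℝ => x) ∘ Real.sqrt ∘ hcond.1.eigenvalues)
        = Matrix.diagonal (RCLike.ofReal ∘ hcond.1.eigenvalues) := by
      rw [Matrix.diagonal_mul_diagonal]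
      congr 1; funext i
      simp [Real.mul_self_sqrt (hSig.eigenvalues_pos i).le]
    conv_rhs => rw [hcond.1.spectral_theorem]
    rw [← hDD]
    simp only [Matrix.mul_assoc, Unitary.conjStarAlgAut_apply]
    rw [← Matrix.mul_assoc _ (hcond.1.eigenvectorUnitary : Matrix (Fin d) (Fin d) ℝ), hUU,
      Matrix.one_mul]
  have hWsym : Wᵀ = W := by
    rw [hWeq, ← Matrix.conjTranspose_eq_transpose_of_trivial]
    simp [Matrix.star_eq_conjTranspose, Matrix.conjTranspose_eq_transpose_of_trivial, Matrix.mul_assoc]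
  have hdet : IsUnit W.det := by
    have h2 : W.det * W.det = Sig.det := by rw [← Matrix.det_mul, hWW]
    have h3 := hSig.det_pos
    refine isUnit_iff_ne_zero.mpr fun h => ?_
    rw [h, zero_mul] at h2
    exact absurd h2.symm (ne_of_gt h3)
  have hWinv : W * W⁻¹ = 1 := Matrix.mul_nonsing_inv _ hdet
  have hinvW : W⁻¹ * W = 1 := Matrix.nonsing_inv_mul _ hdet
  have hcan : ∀ Zm : Matrix (Fin d) (Fin d) ℝ, W⁻¹ * (W * Zm) = Zm := fun Zm => by
    rw [← Matrix.mul_assoc, hinvW, Matrix.one_mul]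
  have hSigT : Sigᵀ = Sig := by
    rw [← Matrix.conjTranspose_eq_transpose_of_trivial]; exact hSig.isHermitian
  have hQsym : (Pmat p Sig)ᵀ = Pmat p Sig := by
    unfold Pmat
    rw [Matrix.fromBlocks_transpose]
    simp [hSigT]
  have hPsym : ∀ a b : Matrix (Fin p ⊕ Fin d) (Fin d) ℝ, Pinner Sig a b = Pinner Sig b a := by
    intro a b
    unfold Pinner
    conv_lhs => rw [← Matrix.trace_transpose]
    rw [Matrix.transpose_mul, Matrix.transpose_mul, Matrix.transpose_transpose, hQsym,
      ← Matrix.mul_assoc]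
  have hPnonneg : ∀ a : Matrix (Fin p ⊕ Fin d) (Fin d) ℝ, 0 ≤ Pinner Sig a a := by
    intro a
    rw [pinner_expand]
    refine Finset.sum_nonneg fun k _ => ?_
    have hdp2 : ∀ v : Fin p ⊕ Fin d → ℝ, 0 ≤ v ⬝ᵥ (Pmat p Sig) *ᵥ v := by
      intro v
      have hv : (Pmat p Sig) *ᵥ v = Sum.elim (v ∘ Sum.inl) (Sig *ᵥ (v ∘ Sum.inr)) := by
        conv_lhs => rw [← Sum.elim_comp_inl_inr v]
        unfold Pmat
        rw [Matrix.fromBlocks_mulVec]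
        simp
      rw [hv]
      have hsplit : v ⬝ᵥ Sum.elim (v ∘ Sum.inl) (Sig *ᵥ (v ∘ Sum.inr))
          = (∑ i : Fin p, v (Sum.inl i) * v (Sum.inl i))
            + (v ∘ Sum.inr) ⬝ᵥ Sig *ᵥ (v ∘ Sum.inr) := by
        simp [dotProduct, Fintype.sum_sum_type]
      rw [hsplit]
      have h1 : 0 ≤ ∑ i : Fin p, v (Sum.inl i) * v (Sum.inl i) :=
        Finset.sum_nonneg fun i _ => mul_self_nonneg _
      have h2 : 0 ≤ (v ∘ Sum.inr) ⬝ᵥ Sig *ᵥ (v ∘ Sum.inr) := by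
        simpa using hcond.2 (v ∘ Sum.inr)
      linarith
    have hswap : ∑ m : Fin p ⊕ Fin d, ∑ l : Fin p ⊕ Fin d,
        a l k * Pmat p Sig l m * a m k
        = (fun l => a l k) ⬝ᵥ (Pmat p Sig) *ᵥ (fun l => a l k) := by
      rw [Finset.sum_comm]
      simp only [dotProduct, Matrix.mulVec, Finset.mul_sum, mul_assoc]
    rw [hswap]
    exact hdp2 _
  have hkey : ∀ s ∈ Sman Sig U Γ V,
      Pinner Sig (θ - θstar) (θ - θstar) ≤ Pinner Sig (θ - s) (θ - s) := by
    intro s hs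
    have h1 := hproj s hs
    unfold Pnorm at h1
    have h2 := hPnonneg (θ - θstar)
    have h3 := hPnonneg (θ - s)
    nlinarith [Real.sq_sqrt h2, Real.sq_sqrt h3,
      Real.sqrt_nonneg (Pinner Sig (θ - θstar) (θ - θstar)),
      Real.sqrt_nonneg (Pinner Sig (θ - s) (θ - s))]
  set A : Matrix (Fin d) (Fin d) ℝ := (θ - θstar)ᵀ * Pmat p Sig * θstar with hAdef
  set Sm : Matrix (Fin d) (Fin d) ℝ := W⁻¹ * A * W with hSmdef
  have hSm : ∀ i j : Fin d, Sm i j = Sm j i := by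
    intro i j
    rcases eq_or_ne i j with rfl | hij
    · rfl
    set X : Matrix (Fin d) (Fin d) ℝ :=
      Matrix.single i j (1:ℝ) - Matrix.single j i 1 with hXdef
    set Dm : Matrix (Fin d) (Fin d) ℝ :=
      Matrix.single i i (1:ℝ) + Matrix.single j j 1 with hDdef
    have hXT : Xᵀ = -X := by
      rw [hXdef, Matrix.transpose_sub, stdBasis_transpose, stdBasis_transpose, neg_sub]
    have hDT : Dmᵀ = Dm := by
      rw [hDdef, Matrix.transpose_add, stdBasis_transpose, stdBasis_transpose, add_comm]
    have hXX : X * X = -Dm := by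
      rw [hXdef, hDdef, Matrix.sub_mul, Matrix.mul_sub, Matrix.mul_sub,
        Matrix.single_mul_single_of_ne _ _ _ _ (Ne.symm hij),
        Matrix.single_mul_single_of_ne _ _ _ _ hij,
        Matrix.single_mul_single_same, Matrix.single_mul_single_same]
      simp
      abel
    have hXD : X * Dm = X := by
      rw [hXdef, hDdef, Matrix.sub_mul, Matrix.mul_add, Matrix.mul_add,
        Matrix.single_mul_single_of_ne _ _ _ _ (Ne.symm hij),
        Matrix.single_mul_single_of_ne _ _ _ _ hij,
        Matrix.single_mul_single_same, Matrix.single_mul_single_same]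
      simp
    have hDX : Dm * X = X := by
      rw [hXdef, hDdef, Matrix.add_mul, Matrix.mul_sub, Matrix.mul_sub,
        Matrix.single_mul_single_of_ne _ _ _ _ hij,
        Matrix.single_mul_single_of_ne _ _ _ _ (Ne.symm hij),
        Matrix.single_mul_single_same, Matrix.single_mul_single_same]
      simp
      abel
    have hDD : Dm * Dm = Dm := by
      rw [hDdef, Matrix.add_mul, Matrix.mul_add, Matrix.mul_add,
        Matrix.single_mul_single_of_ne _ _ _ _ hij,
        Matrix.single_mul_single_of_ne _ _ _ _ (Ne.symm hij),
        Matrix.single_mul_single_same, Matrix.single_mul_single_same]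
      simp
    set R : ℝ → Matrix (Fin d) (Fin d) ℝ :=
      fun t => 1 + Real.sin t • X + (Real.cos t - 1) • Dm with hRdef
    have hRT : ∀ t, (R t)ᵀ = 1 + (-Real.sin t) • X + (Real.cos t - 1) • Dm := by
      intro t
      rw [hRdef]
      rw [Matrix.transpose_add, Matrix.transpose_add, Matrix.transpose_one,
        Matrix.transpose_smul, Matrix.transpose_smul, hXT, hDT, smul_neg, ← neg_smul]
    have hRort : ∀ t, (R t)ᵀ * R t = 1 := by
      intro t
      rw [hRT, hRdef]
      have expand : (1 + (-Real.sin t) • X + (Real.cos t - 1) • Dm)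
          * (1 + Real.sin t • X + (Real.cos t - 1) • Dm)
          = 1 + (Real.sin t * Real.sin t + (Real.cos t - 1) * (Real.cos t - 1)
              + 2 * (Real.cos t - 1)) • Dm := by
        simp only [Matrix.mul_add, Matrix.add_mul, Matrix.smul_mul, Matrix.mul_smul,
          Matrix.one_mul, Matrix.mul_one, hXX, hXD, hDX, hDD, smul_smul]
        module
      rw [expand]
      have hz : Real.sin t * Real.sin t + (Real.cos t - 1) * (Real.cos t - 1)
          + 2 * (Real.cos t - 1) = 0 := by
        have := Real.sin_sq_add_cos_sq t
        nlinarith [this]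
      rw [hz, zero_smul, add_zero]
    have hmem' : ∀ t, θstar * (W * (R t)ᵀ * W⁻¹) ∈ Sman Sig U Γ V := by
      intro t
      refine ⟨R t * J, ?_, ?_⟩
      · rw [Matrix.transpose_mul, Matrix.mul_assoc, ← Matrix.mul_assoc ((R t)ᵀ), hRort,
          Matrix.one_mul, hJ]
      · rw [hθs, vcat_mul']
        simp only [← hWdef]
        simp only [Matrix.transpose_mul, Matrix.mul_assoc, hcan]
    set Y : Matrix (Fin p ⊕ Fin d) (Fin d) ℝ := θstar * (W * X * W⁻¹) with hYdef
    set Z : Matrix (Fin p ⊕ Fin d) (Fin d) ℝ := θstar * (W * Dm * W⁻¹) with hZdef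
    have hCt : ∀ t, W * (R t)ᵀ * W⁻¹
        = 1 + (-Real.sin t) • (W * X * W⁻¹) + (Real.cos t - 1) • (W * Dm * W⁻¹) := by
      intro t
      rw [hRT]
      simp only [Matrix.mul_add, Matrix.add_mul, Matrix.mul_smul, Matrix.smul_mul,
        Matrix.mul_one, hWinv]
    have he : ∀ t, θ - θstar * (W * (R t)ᵀ * W⁻¹)
        = (θ - θstar) + Real.sin t • Y + (1 - Real.cos t) • Z := by
      intro t
      rw [hCt, Matrix.mul_add, Matrix.mul_add, Matrix.mul_one, Matrix.mul_smul,
        Matrix.mul_smul, ← hYdef, ← hZdef]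
      module
    set f : ℝ → ℝ := fun t => Pinner Sig (θ - θstar * (W * (R t)ᵀ * W⁻¹))
      (θ - θstar * (W * (R t)ᵀ * W⁻¹)) with hfdef
    have hR0 : θstar * (W * (R 0)ᵀ * W⁻¹) = θstar := by
      have h0 : (R 0)ᵀ = 1 := by
        rw [hRT]; simp
      rw [h0, Matrix.mul_one, hWinv, Matrix.mul_one]
    have hmin : ∀ t, f 0 ≤ f t := by
      intro t
      have hk := hkey _ (hmem' t)
      rw [hfdef]
      simpa [hR0] using hk
    have hlocal : IsLocalMin f 0 := Filter.Eventually.of_forall hmin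
    have hE : ∀ (l : Fin p ⊕ Fin d) (k : Fin d),
        HasDerivAt (fun t => (θ - θstar) l k + Real.sin t * Y l k + (1 - Real.cos t) * Z l k)
          (Y l k) 0 := by
      intro l k
      have h1 : HasDerivAt (fun t => (θ - θstar) l k + Real.sin t * Y l k) (Y l k) 0 := by
        simpa using ((Real.hasDerivAt_sin 0).mul_const (Y l k)).const_add ((θ - θstar) l k)
      have h2 : HasDerivAt (fun t => (1 - Real.cos t) * Z l k) 0 0 := by
        simpa using ((Real.hasDerivAt_cos 0).const_sub 1).mul_const (Z l k)
      simpa using h1.fun_add h2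
    have hf' : HasDerivAt f (∑ k : Fin d, ∑ m : Fin p ⊕ Fin d, ∑ l : Fin p ⊕ Fin d,
        (Y l k * Pmat p Sig l m * (θ - θstar) m k
          + (θ - θstar) l k * Pmat p Sig l m * Y m k)) 0 := by
      have hrep : f = fun t => ∑ k : Fin d, ∑ m : Fin p ⊕ Fin d, ∑ l : Fin p ⊕ Fin d,
          ((θ - θstar) l k + Real.sin t * Y l k + (1 - Real.cos t) * Z l k)
            * Pmat p Sig l m
            * ((θ - θstar) m k + Real.sin t * Y m k + (1 - Real.cos t) * Z m k) := by
        funext t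
        rw [hfdef]
        simp only
        rw [he t, pinner_expand]
        refine Finset.sum_congr rfl fun k _ => Finset.sum_congr rfl fun m _ =>
          Finset.sum_congr rfl fun l _ => ?_
        simp [Matrix.add_apply, Matrix.sub_apply, Matrix.smul_apply, smul_eq_mul]
      rw [hrep]
      apply HasDerivAt.fun_sum; intro k _
      apply HasDerivAt.fun_sum; intro m _
      apply HasDerivAt.fun_sum; intro l _
      have hd := ((hE l k).mul_const (Pmat p Sig l m)).fun_mul (hE m k)
      simpa using hd
    have hderiv0 := hlocal.hasDerivAt_eq_zero hf'
    have hD0 : Pinner Sig (θ - θstar) Y = 0 := by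
      have hsplit : (∑ k : Fin d, ∑ m : Fin p ⊕ Fin d, ∑ l : Fin p ⊕ Fin d,
          (Y l k * Pmat p Sig l m * (θ - θstar) m k
            + (θ - θstar) l k * Pmat p Sig l m * Y m k))
          = Pinner Sig Y (θ - θstar) + Pinner Sig (θ - θstar) Y := by
        rw [pinner_expand, pinner_expand, ← Finset.sum_add_distrib]
        refine Finset.sum_congr rfl fun k _ => ?_
        rw [← Finset.sum_add_distrib]
        refine Finset.sum_congr rfl fun m _ => ?_
        rw [← Finset.sum_add_distrib]
      rw [hsplit] at hderiv0
      rw [hPsym Y (θ - θstar)] at hderiv0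
      linarith
    have htr : Pinner Sig (θ - θstar) Y = Sm j i - Sm i j := by
      have h1 : Pinner Sig (θ - θstar) Y = (Sm * X).trace := by
        unfold Pinner
        rw [hYdef, hSmdef, hAdef]
        have e1 : (θ - θstar)ᵀ * Pmat p Sig * (θstar * (W * X * W⁻¹))
            = ((θ - θstar)ᵀ * Pmat p Sig * θstar * W * X) * W⁻¹ := by
          simp only [Matrix.mul_assoc]
        rw [e1, Matrix.trace_mul_comm]
        congr 1
        simp only [Matrix.mul_assoc]
      rw [h1, hXdef, Matrix.mul_sub, Matrix.trace_sub, trace_mul_stdBasis, trace_mul_stdBasis]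
    rw [htr] at hD0
    linarith
  have hSmT : Smᵀ = Sm := by
    ext a b
    rw [Matrix.transpose_apply]
    exact hSm b a
  have hAS : A * Sig = W * Sm * W := by
    rw [hSmdef]
    have e2 : W * (W⁻¹ * A * W) * W = (W * W⁻¹) * (A * (W * W)) := by
      simp only [Matrix.mul_assoc]
    rw [e2, hWinv, Matrix.one_mul, hWW]
  show (A * Sig).IsSymm
  unfold Matrix.IsSymm
  rw [hAS]
  calc (W * Sm * W)ᵀ = Wᵀ * (Smᵀ * Wᵀ) := by
        rw [Matrix.transpose_mul, Matrix.transpose_mul]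
    _ = W * (Sm * W) := by rw [hWsym, hSmT]
    _ = W * Sm * W := (Matrix.mul_assoc W Sm W).symm


end
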